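/- arXiv:1905.04843 — 3 statements merged into one kernel-verified Lean document; each statement's English description precedes it below -/
import Mathlib

section
/- Let 0 ≤ s < t < t₁. If a Markovian transition semigroup (P_{s,t}) is strongly Feller at (t, t₁) and irreducible at (s, t), then it is regular at (s, t₁); that is, all transition probability measures P(s, x, t₁, ·), x ∈ ℝ^m, are mutually equivalent. -/
open MeasureTheory

/-!
Fix `A` with `P(s, y, t₁, A) = 0`. By Chapman–Kolmogorov, `z ↦ P(t, z, t₁, A)` vanishes
`P(s, y, t, ·)`-a.e.; strong Feller makes this function continuous, and irreducibility says
`P(s, y, t, ·)` charges every nonempty open set, so it vanishes everywhere. Chapman–Kolmogorov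
from any other starting point `x` then gives `P(s, x, t₁, A) = 0`.
-/

section StrongFeller

variable {X Y : Type*} [TopologicalSpace X] [MeasurableSpace Y]

theorem continuous_measure_apply_of_strongFeller {κ : X → Measure Y}
    [∀ x, IsFiniteMeasure (κ x)]
    (hSF : ∀ f : Y → ℝ, Measurable f → (∃ K, ∀ z, |f z| ≤ K) →
      Continuous fun x => ∫ z, f z ∂κ x)
    {A : Set Y} (hA : MeasurableSet A) :
    Continuous fun x => κ x A := by
  have hbdd : ∀ z, |A.indicator (1 : Y → ℝ) z| ≤ 1 := fun z => by
    by_cases hz : z ∈ A <;> simp [hz]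
  have hreal : Continuous fun x => (κ x).real A := by
    simpa only [integral_indicator_one hA] using
      hSF _ (measurable_one.indicator hA) ⟨1, hbdd⟩
  convert ENNReal.continuous_ofReal.comp hreal with x
  exact (ofReal_measureReal).symm

theorem Continuous.eq_zero_of_lintegral_eq_zero [MeasurableSpace X] [OpensMeasurableSpace X]
    {μ : Measure X} [μ.IsOpenPosMeasure] {g : X → ENNReal} (hg : Continuous g)
    (h : ∫⁻ x, g x ∂μ = 0) : g = 0 :=
  (hg.ae_eq_iff_eq μ continuous_const).1 ((lintegral_eq_zero_iff hg.measurable).1 h)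

theorem absolutelyContinuous_of_strongFeller_of_isOpenPosMeasure {W : Type*}
    [MeasurableSpace X] [OpensMeasurableSpace X]
    {μ : W → Measure X} {κ : X → Measure Y} {ν : W → Measure Y}
    [∀ x, IsFiniteMeasure (κ x)] [∀ w, (μ w).IsOpenPosMeasure]
    (hSF : ∀ f : Y → ℝ, Measurable f → (∃ K, ∀ z, |f z| ≤ K) →
      Continuous fun x => ∫ z, f z ∂κ x)
    (hCK : ∀ w A, MeasurableSet A → ν w A = ∫⁻ y, κ y A ∂μ w) (w w' : W) :
    ν w ≪ ν w' := by
  refine Measure.AbsolutelyContinuous.mk fun A hA hA0 => ?_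
  have hκA : (fun y => κ y A) = 0 :=
    (continuous_measure_apply_of_strongFeller hSF hA).eq_zero_of_lintegral_eq_zero
      (μ := μ w') (by rw [← hCK w' A hA, hA0])
  rw [hCK w A hA, hκA, lintegral_zero_fun]

end StrongFeller

theorem stmt_6_general (m : ℕ) (P : ℝ → ℝ → (Fin m → ℝ) → Measure (Fin m → ℝ))
    (s t t₁ : ℝ)
    (hprob : ∀ u v : ℝ, ∀ x, IsProbabilityMeasure (P u v x))
    -- Chapman–Kolmogorov between times s, t, t₁
    (hCK : ∀ x : Fin m → ℝ, ∀ A : Set (Fin m → ℝ), MeasurableSet A →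
      P s t₁ x A = ∫⁻ y, P t t₁ y A ∂ P s t x)
    -- strong Feller at (t, t₁)
    (hSF : ∀ f : (Fin m → ℝ) → ℝ, Measurable f → (∃ K, ∀ z, |f z| ≤ K) →
      Continuous fun x => ∫ z, f z ∂ P t t₁ x)
    -- irreducibility at (s, t)
    (hIrr : ∀ x : Fin m → ℝ, ∀ A : Set (Fin m → ℝ),
      IsOpen A → A.Nonempty → 0 < P s t x A) :
    ∀ x y : Fin m → ℝ, P s t₁ x ≪ P s t₁ y := by
  have := hprob t t₁
  have (x : Fin m → ℝ) : (P s t x).IsOpenPosMeasure :=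
    ⟨fun U hU hne => (hIrr x U hU hne).ne'⟩
  exact absolutelyContinuous_of_strongFeller_of_isOpenPosMeasure hSF hCK

/-- Strong Feller at `(t, t₁)` together with irreducibility at `(s, t)` implies
regularity at `(s, t₁)`: all measures `P s x t₁ ·` are mutually equivalent. -/
theorem stmt_6 (m : ℕ) (P : ℝ → ℝ → (Fin m → ℝ) → Measure (Fin m → ℝ))
    (s t t₁ : ℝ) (hs : 0 ≤ s) (hst : s < t) (htt₁ : t < t₁)
    (hprob : ∀ u v : ℝ, ∀ x, IsProbabilityMeasure (P u v x))
    (hmeas : ∀ u v : ℝ, ∀ A : Set (Fin m → ℝ), MeasurableSet A →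
      Measurable fun x => P u v x A)
    -- Chapman–Kolmogorov between times s, t, t₁
    (hCK : ∀ x : Fin m → ℝ, ∀ A : Set (Fin m → ℝ), MeasurableSet A →
      P s t₁ x A = ∫⁻ y, P t t₁ y A ∂ P s t x)
    -- strong Feller at (t, t₁)
    (hSF : ∀ f : (Fin m → ℝ) → ℝ, Measurable f → (∃ K, ∀ z, |f z| ≤ K) →
      Continuous fun x => ∫ z, f z ∂ P t t₁ x)
    -- irreducibility at (s, t)
    (hIrr : ∀ x : Fin m → ℝ, ∀ A : Set (Fin m → ℝ),
      IsOpen A → A.Nonempty → 0 < P s t x A) :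
    ∀ x y : Fin m → ℝ, P s t₁ x ≪ P s t₁ y :=
  stmt_6_general m P s t t₁ hprob hCK hSF hIrr
end

section
/- Let (P_{s,t}) be a θ-periodic Markovian transition semigroup that is regular at (s, s+θ) for every s ∈ [0,θ). Then there is at most one family of probability measures (μ_s)_{s≥0} that is θ-periodic with respect to (P_{s,t}), i.e., satisfying μ_s(A) = ∫ P(s,x,s+θ,A) μ_s(dx) for all Borel A and s ≥ 0. -/
/-!
Let `T` be a Hahn set with `ν ≤ μ` on `T` and `μ ≤ ν` on `Tᶜ`, and suppose `ν T < μ T`. By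
regularity `κ x T` is either zero for every `x`, which invariance turns into `μ T = 0`, or positive
for every `x`. In the latter case the flux balance of invariant measures gives
`∫_{Tᶜ} κ(·,T) dμ < ∫_{Tᶜ} κ(·,T) dν = ∫_T κ(·,Tᶜ) dν ≤ ∫_T κ(·,Tᶜ) dμ = ∫_{Tᶜ} κ(·,T) dμ`.
Hence `μ ≤ ν`, and two probability measures with `μ ≤ ν` agree. Periodicity moves any time `s ≥ 0`
to `s - ⌊s/θ⌋ θ ∈ [0, θ)`, where the one-period kernel is regular.
-/
open MeasureTheory ProbabilityTheory

section

variable {X : Type*} [MeasurableSpace X]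

lemma lintegral_lt_lintegral_of_le_of_measure_univ_lt {μ ν : Measure X} [IsFiniteMeasure μ]
    (hle : μ ≤ ν) (hlt : μ Set.univ < ν Set.univ) {f : X → ENNReal} (hf : Measurable f)
    (hpos : ∀ x, f x ≠ 0) (hfin : ∫⁻ x, f x ∂μ ≠ ⊤) :
    ∫⁻ x, f x ∂μ < ∫⁻ x, f x ∂ν := by
  have hdiff : 0 < ∫⁻ x, f x ∂(ν - μ) := by
    rw [lintegral_pos_iff_support hf, Function.support_eq_univ hpos,
      Measure.sub_apply MeasurableSet.univ hle]
    exact tsub_pos_of_lt hlt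
  calc ∫⁻ x, f x ∂μ < ∫⁻ x, f x ∂μ + ∫⁻ x, f x ∂(ν - μ) := ENNReal.lt_add_right hfin hdiff.ne'
    _ = ∫⁻ x, f x ∂ν := by
      rw [← lintegral_add_measure, add_comm, Measure.sub_add_cancel_of_le hle]

lemma MeasureTheory.IsHahnDecomposition.le_of_measure_compl_le {μ ν : Measure X}
    [IsFiniteMeasure ν] {s : Set X} (h : IsHahnDecomposition μ ν s) (hc : μ sᶜ ≤ ν sᶜ) :
    μ ≤ ν := by
  have hmass : ν sᶜ = μ sᶜ := le_antisymm (by simpa using h.ge_on_compl Set.univ) hc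
  have hcompl : ν.restrict sᶜ = μ.restrict sᶜ :=
    Measure.eq_of_le_of_measure_univ_eq h.ge_on_compl (by simpa using hmass)
  calc μ = μ.restrict s + μ.restrict sᶜ :=
        (Measure.restrict_add_restrict_compl h.measurableSet).symm
    _ ≤ ν.restrict s + ν.restrict sᶜ := add_le_add h.le_on hcompl.ge
    _ = ν := Measure.restrict_add_restrict_compl h.measurableSet

end

namespace ProbabilityTheory.Kernel

variable {X : Type*} [MeasurableSpace X] {κ : Kernel X X} {μ ν : Measure X}

lemma invariant_iff :
    κ.Invariant μ ↔ ∀ A, MeasurableSet A → μ A = ∫⁻ x, κ x A ∂μ := by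
  refine ⟨fun h A hA ↦ ?_, fun h ↦ Measure.ext fun A hA ↦ ?_⟩
  · rw [← Measure.bind_apply hA κ.aemeasurable, h.def]
  · rw [Measure.bind_apply hA κ.aemeasurable, h A hA]

lemma Invariant.measure_eq_zero_of_apply_eq_zero (hreg : ∀ x y, κ x ≪ κ y)
    (hμ : κ.Invariant μ) {A : Set X} (hA : MeasurableSet A) {x₀ : X} (hx₀ : κ x₀ A = 0) :
    μ A = 0 := by
  simp [invariant_iff.1 hμ A hA, fun x ↦ hreg x x₀ hx₀]

-- Flux balance: in one step, an invariant measure sends as much mass from `Sᶜ` into `S` as back.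
lemma Invariant.setLIntegral_compl_eq [IsMarkovKernel κ] [IsFiniteMeasure μ]
    (hμ : κ.Invariant μ) {S : Set X} (hS : MeasurableSet S) :
    ∫⁻ x in Sᶜ, κ x S ∂μ = ∫⁻ x in S, κ x Sᶜ ∂μ := by
  have h_in : ∫⁻ x in S, κ x S ∂μ + ∫⁻ x in Sᶜ, κ x S ∂μ = μ S :=
    (lintegral_add_compl _ hS).trans (invariant_iff.1 hμ S hS).symm
  have h_out : ∫⁻ x in S, κ x S ∂μ + ∫⁻ x in S, κ x Sᶜ ∂μ = μ S := by
    simp_rw [← lintegral_add_left (κ.measurable_coe hS), measure_add_measure_compl hS,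
      measure_univ, setLIntegral_one]
  have h_fin : ∫⁻ x in S, κ x S ∂μ ≠ ⊤ :=
    ne_top_of_le_ne_top (measure_ne_top μ S) (le_self_add.trans h_in.le)
  exact (ENNReal.add_right_inj h_fin).1 (h_in.trans h_out.symm)

lemma Invariant.measure_le_of_isHahnDecomposition [IsMarkovKernel κ] [IsProbabilityMeasure μ]
    [IsProbabilityMeasure ν] (hreg : ∀ x y, κ x ≪ κ y) (hμ : κ.Invariant μ)
    (hν : κ.Invariant ν) {T : Set X} (hT : IsHahnDecomposition ν μ T) : μ T ≤ ν T := by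
  by_contra! hlt
  have hpos : ∀ x, κ x T ≠ 0 := fun x hx ↦
    (pos_of_gt hlt).ne' (hμ.measure_eq_zero_of_apply_eq_zero hreg hT.measurableSet hx)
  have hcompl : μ Tᶜ < ν Tᶜ :=
    (prob_compl_lt_one_sub_of_lt_prob hlt hT.measurableSet).trans_eq
      (prob_compl_eq_one_sub hT.measurableSet).symm
  have hfin : ∫⁻ x in Tᶜ, κ x T ∂μ ≠ ⊤ :=
    ne_top_of_le_ne_top (measure_ne_top μ Tᶜ)
      ((lintegral_mono fun _ ↦ prob_le_one).trans_eq (setLIntegral_one _))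
  refine lt_irrefl (∫⁻ x in Tᶜ, κ x T ∂μ) ?_
  calc ∫⁻ x in Tᶜ, κ x T ∂μ
      < ∫⁻ x in Tᶜ, κ x T ∂ν := lintegral_lt_lintegral_of_le_of_measure_univ_lt hT.ge_on_compl
        (by simpa using hcompl) (κ.measurable_coe hT.measurableSet) hpos hfin
    _ = ∫⁻ x in T, κ x Tᶜ ∂ν := hν.setLIntegral_compl_eq hT.measurableSet
    _ ≤ ∫⁻ x in T, κ x Tᶜ ∂μ := lintegral_mono' hT.le_on le_rfl
    _ = ∫⁻ x in Tᶜ, κ x T ∂μ := (hμ.setLIntegral_compl_eq hT.measurableSet).symm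

theorem Invariant.eq_of_forall_absolutelyContinuous [IsMarkovKernel κ] [IsProbabilityMeasure μ]
    [IsProbabilityMeasure ν] (hreg : ∀ x y, κ x ≪ κ y) (hμ : κ.Invariant μ)
    (hν : κ.Invariant ν) : μ = ν := by
  obtain ⟨S, hS⟩ := exists_isHahnDecomposition μ ν
  exact Measure.eq_of_le_of_isProbabilityMeasure <|
    hS.le_of_measure_compl_le (hμ.measure_le_of_isHahnDecomposition hreg hν hS.compl)

end ProbabilityTheory.Kernel

lemma add_nat_mul_eq_of_forall_add_eq {α : Type*} {f : ℝ → α} {θ : ℝ} (hθ : 0 ≤ θ)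
    (hper : ∀ s ≥ (0 : ℝ), f (s + θ) = f s) (n : ℕ) {t : ℝ} (ht : 0 ≤ t) :
    f (t + n * θ) = f t := by
  induction n with
  | zero => simp
  | succ n ih =>
    rw [Nat.cast_succ, add_one_mul, ← add_assoc, hper _ (by positivity), ih]

lemma exists_mem_Ico_eq_of_forall_add_eq {α : Type*} {f : ℝ → α} {θ : ℝ} (hθ : 0 < θ)
    (hper : ∀ s ≥ (0 : ℝ), f (s + θ) = f s) {s : ℝ} (hs : 0 ≤ s) :
    ∃ s₀ ∈ Set.Ico 0 θ, f s = f s₀ := by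
  set n := ⌊s / θ⌋₊
  have hn_le : n * θ ≤ s := (le_div_iff₀ hθ).1 (Nat.floor_le (div_nonneg hs hθ.le))
  have hlt_succ : s < (n + 1) * θ := (div_lt_iff₀ hθ).1 (Nat.lt_floor_add_one _)
  refine ⟨s - n * θ, ⟨by linarith, by linarith⟩, ?_⟩
  rw [← add_nat_mul_eq_of_forall_add_eq hθ.le hper n (by linarith : 0 ≤ s - n * θ), sub_add_cancel]

/-- Uniqueness of θ-periodic families of measures for a θ-periodic Markovian
semigroup that is regular at `(s, s+θ)` for every `s ∈ [0,θ)`. Here `Q s`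
denotes the one-period transition kernel `P(s, ·, s+θ, ·)`. -/
theorem stmt_8 (m : ℕ) (θ : ℝ) (hθ : 0 < θ)
    (Q : ℝ → (Fin m → ℝ) → Measure (Fin m → ℝ))
    (hQprob : ∀ s x, IsProbabilityMeasure (Q s x))
    (hQmeas : ∀ s, ∀ A : Set (Fin m → ℝ), MeasurableSet A →
      Measurable fun x => Q s x A)
    -- θ-periodicity of the semigroup
    (hper : ∀ s ≥ (0:ℝ), Q (s + θ) = Q s)
    -- regularity at (s, s+θ) for s ∈ [0,θ)
    (hreg : ∀ s ∈ Set.Ico (0:ℝ) θ, ∀ x y, Q s x ≪ Q s y)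
    (μ μ' : ℝ → Measure (Fin m → ℝ))
    (hμprob : ∀ s, IsProbabilityMeasure (μ s)) (hμ'prob : ∀ s, IsProbabilityMeasure (μ' s))
    -- both families are θ-periodic with respect to the semigroup
    (hμinv : ∀ s ≥ (0:ℝ), ∀ A : Set (Fin m → ℝ), MeasurableSet A →
      μ s A = ∫⁻ x, Q s x A ∂ μ s)
    (hμ'inv : ∀ s ≥ (0:ℝ), ∀ A : Set (Fin m → ℝ), MeasurableSet A →
      μ' s A = ∫⁻ x, Q s x A ∂ μ' s) :
    ∀ s ≥ (0:ℝ), μ s = μ' s := by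
  intro s hs
  obtain ⟨s₀, hs₀, hQs⟩ := exists_mem_Ico_eq_of_forall_add_eq hθ hper hs
  let κ : Kernel (Fin m → ℝ) (Fin m → ℝ) :=
    ⟨Q s, Measure.measurable_of_measurable_coe _ (hQmeas s)⟩
  have : IsMarkovKernel κ := ⟨hQprob s⟩
  have := hμprob s
  have := hμ'prob s
  exact Kernel.Invariant.eq_of_forall_absolutelyContinuous (κ := κ)
    (hQs ▸ hreg s₀ hs₀ : ∀ x y, Q s x ≪ Q s y)
    (Kernel.invariant_iff.2 (hμinv s hs)) (Kernel.invariant_iff.2 (hμ'inv s hs))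
end

section
/- Let (μ_s) be θ-periodic probability measures with respect to a regular θ-periodic Markovian semigroup (P_{s,t}). Then for any s ≥ 0 and φ ∈ L²(ℝ^m; μ_s), the Cesàro averages (1/n) Σ_{i=1}^n P_{s,s+iθ} φ converge to the constant ∫ φ dμ_s in L²(ℝ^m; μ_s) as n → ∞. -/
/-!
The one-period kernel acts on `L²(μ)` as a contraction `T` (Jensen's inequality in each fibre,
then invariance of `μ`), so by von Neumann's mean ergodic theorem the Cesàro averages of
`T^i (Tφ)` converge in `L²` to the orthogonal projection of `Tφ` onto the fixed points of `T`.
A fixed point `g` satisfies `∫ Var_{K x}(g) dμ(x) = ‖g‖² - ‖Tg‖² = 0`, so `g` is `K x`-a.s.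
constant for some `x`; as all the `K x` are equivalent, it is then a.s. equal to that constant
under every `K x`, hence under `μ`. So the fixed points are the constants, and the projection of
`Tφ` is its mean `∫ Tφ dμ = ∫ φ dμ`.
-/

open MeasureTheory Filter ProbabilityTheory Topology
open scoped ENNReal

section MeanErgodic

variable {𝕜 E : Type*} [RCLike 𝕜] [NormedAddCommGroup E] [InnerProductSpace 𝕜 E]
  [CompleteSpace E]

theorem ContinuousLinearMap.tendsto_birkhoffAverage_of_fixedPoints_eq_span (T : E →L[𝕜] E)
    (hT : ‖T‖ ≤ 1) {v : E} (hv : T v = v) (hfix : ∀ y, T y = y → y ∈ 𝕜 ∙ v) (x : E) :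
    Tendsto (birkhoffAverage 𝕜 T id · x) atTop
      (𝓝 ((inner 𝕜 v x / ((‖v‖ ^ 2 : ℝ) : 𝕜)) • v)) := by
  have hspan : (T : E →ₗ[𝕜] E).eqLocus (1 : E →L[𝕜] E) = 𝕜 ∙ v := by
    refine le_antisymm (fun y hy => hfix y hy) ?_
    rw [Submodule.span_singleton_le_iff_mem]
    exact hv
  -- `rw [hspan]` is blocked by the `HasOrthogonalProjection` instance, so generalise over it.
  have key : ∀ (K : Submodule 𝕜 E) [K.HasOrthogonalProjection], K = 𝕜 ∙ v →
      K.starProjection x = (inner 𝕜 v x / ((‖v‖ ^ 2 : ℝ) : 𝕜)) • v := by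
    rintro K _ rfl
    exact Submodule.starProjection_singleton 𝕜 x
  have h := T.tendsto_birkhoffAverage_orthogonalProjection hT x
  rwa [← Submodule.starProjection_apply, key _ hspan] at h

end MeanErgodic

theorem MeasureTheory.Lp.coeFn_birkhoffAverage {α : Type*} [MeasurableSpace α] {μ : Measure α}
    {p : ℝ≥0∞} {T : Lp ℝ p μ → Lp ℝ p μ} {f : Lp ℝ p μ} {u : ℕ → α → ℝ}
    (hu : ∀ i, ⇑(T^[i] f) =ᵐ[μ] u i) (n : ℕ) :
    ⇑(birkhoffAverage ℝ T id n f) =ᵐ[μ] fun x => (n : ℝ)⁻¹ * ∑ i ∈ Finset.range n, u i x := by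
  filter_upwards [Lp.coeFn_smul (n : ℝ)⁻¹ (birkhoffSum T id n f),
    Lp.coeFn_fun_finsetSum (Finset.range n) (fun i => T^[i] f), ae_all_iff.2 hu]
    with x hsmul hsum hu
  have hbirkhoffSum : birkhoffSum T id n f = ∑ i ∈ Finset.range n, T^[i] f := rfl
  rw [birkhoffAverage, hsmul, Pi.smul_apply, smul_eq_mul, hbirkhoffSum, hsum]
  simp only [hu]

theorem MeasureTheory.L2.norm_sq_eq_integral_sq {α : Type*} [MeasurableSpace α] {μ : Measure α}
    (f : Lp ℝ 2 μ) : ‖f‖ ^ 2 = ∫ x, f x ^ 2 ∂μ := by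
  rw [← real_inner_self_eq_norm_sq, L2.inner_def]
  simp [sq]

theorem MeasureTheory.enorm_integral_rpow_le_lintegral_enorm_rpow {β E : Type*}
    [MeasurableSpace β] [NormedAddCommGroup E] [NormedSpace ℝ E] {ν : Measure β}
    [IsProbabilityMeasure ν] {q : ℝ} (hq : 1 ≤ q) {f : β → E}
    (hf : AEStronglyMeasurable f ν) :
    ‖∫ y, f y ∂ν‖ₑ ^ q ≤ ∫⁻ y, ‖f y‖ₑ ^ q ∂ν := by
  rw [lintegral_rpow_enorm_eq_rpow_eLpNorm' (by linarith)]
  gcongr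
  calc ‖∫ y, f y ∂ν‖ₑ ≤ ∫⁻ y, ‖f y‖ₑ ∂ν := enorm_integral_le_lintegral_enorm f
    _ = eLpNorm' f 1 ν := by simp [eLpNorm']
    _ ≤ eLpNorm' f q ν := eLpNorm'_le_eLpNorm'_of_exponent_le one_pos hq ν hf

namespace ProbabilityTheory.Kernel

variable {α : Type*} [MeasurableSpace α] {κ : Kernel α α} {μ : Measure α} {f g : α → ℝ}

noncomputable def markovOp (κ : Kernel α α) (f : α → ℝ) (x : α) : ℝ :=
  ∫ y, f y ∂κ x

theorem stronglyMeasurable_markovOp (hf : StronglyMeasurable f) :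
    StronglyMeasurable (markovOp κ f) :=
  hf.integral_kernel

theorem markovOp_const [IsMarkovKernel κ] (c : ℝ) : markovOp κ (fun _ => c) = fun _ => c := by
  ext x
  simp [markovOp]

theorem markovOp_smul (c : ℝ) (f : α → ℝ) : markovOp κ (c • f) = c • markovOp κ f := by
  ext x
  exact integral_smul c f

theorem measurable_evariance [IsSFiniteKernel κ] (hf : Measurable f) :
    Measurable fun x => evariance f (κ x) := by
  have hF : Measurable fun p : α × α => ‖f p.2 - markovOp κ f p.1‖ₑ ^ 2 :=
    ((hf.comp measurable_snd).sub ((stronglyMeasurable_markovOp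
      hf.stronglyMeasurable).measurable.comp measurable_fst)).enorm.pow_const 2
  exact hF.lintegral_kernel_prod_right'

namespace Invariant

theorem ae_ae_of_ae (hκ : κ.Invariant μ) {p : α → Prop} (h : ∀ᵐ y ∂μ, p y) :
    ∀ᵐ x ∂μ, ∀ᵐ y ∂κ x, p y := by
  rw [← hκ.def] at h
  exact Measure.ae_ae_of_ae_comp h

theorem lintegral_lintegral (hκ : κ.Invariant μ) {F : α → ℝ≥0∞} (hF : Measurable F) :
    ∫⁻ x, ∫⁻ y, F y ∂κ x ∂μ = ∫⁻ y, F y ∂μ := by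
  conv_rhs => rw [← hκ.def]
  exact (Measure.lintegral_bind κ.aemeasurable hF.aemeasurable).symm

theorem integral_markovOp (hκ : κ.Invariant μ) (hf : Integrable f μ) :
    ∫ x, markovOp κ f x ∂μ = ∫ y, f y ∂μ := by
  rw [← hκ.def, Measure.comp_eq_comp_const_apply] at hf
  conv_rhs => rw [← hκ.def, Measure.comp_eq_comp_const_apply, Kernel.integral_comp hf]
  simp [markovOp]

theorem markovOp_congr_ae (hκ : κ.Invariant μ) (h : f =ᵐ[μ] g) :
    markovOp κ f =ᵐ[μ] markovOp κ g :=
  (hκ.ae_ae_of_ae h).mono fun _ hx => integral_congr_ae hx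

theorem iterate_markovOp_congr_ae (hκ : κ.Invariant μ) (h : f =ᵐ[μ] g) (n : ℕ) :
    (markovOp κ)^[n] f =ᵐ[μ] (markovOp κ)^[n] g := by
  induction n with
  | zero => exact h
  | succ n ih =>
    rw [Function.iterate_succ_apply', Function.iterate_succ_apply']
    exact hκ.markovOp_congr_ae ih

theorem aestronglyMeasurable_markovOp (hκ : κ.Invariant μ) (hf : AEStronglyMeasurable f μ) :
    AEStronglyMeasurable (markovOp κ f) μ :=
  ⟨_, stronglyMeasurable_markovOp hf.stronglyMeasurable_mk, hκ.markovOp_congr_ae hf.ae_eq_mk⟩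

variable {p : ℝ≥0∞}

theorem eLpNorm_markovOp_le [IsMarkovKernel κ] (hκ : κ.Invariant μ) (hp1 : 1 ≤ p) (hp : p ≠ ∞)
    (hf : AEStronglyMeasurable f μ) : eLpNorm (markovOp κ f) p μ ≤ eLpNorm f p μ := by
  rw [eLpNorm_congr_ae (hκ.markovOp_congr_ae hf.ae_eq_mk), eLpNorm_congr_ae hf.ae_eq_mk]
  set g := hf.mk f
  have hg : StronglyMeasurable g := hf.stronglyMeasurable_mk
  have hp0 : p ≠ 0 := (zero_lt_one.trans_le hp1).ne'
  have hq : 1 ≤ p.toReal := by simpa using ENNReal.toReal_mono hp hp1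
  rw [eLpNorm_eq_lintegral_rpow_enorm_toReal hp0 hp, eLpNorm_eq_lintegral_rpow_enorm_toReal hp0 hp]
  gcongr ?_ ^ _
  calc ∫⁻ x, ‖markovOp κ g x‖ₑ ^ p.toReal ∂μ
      ≤ ∫⁻ x, ∫⁻ y, ‖g y‖ₑ ^ p.toReal ∂κ x ∂μ :=
        lintegral_mono fun x =>
          enorm_integral_rpow_le_lintegral_enorm_rpow hq hg.aestronglyMeasurable
    _ = ∫⁻ y, ‖g y‖ₑ ^ p.toReal ∂μ := hκ.lintegral_lintegral (hg.measurable.enorm.pow_const _)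

theorem memLp_markovOp [IsMarkovKernel κ] (hκ : κ.Invariant μ) (hp1 : 1 ≤ p) (hp : p ≠ ∞)
    (hf : MemLp f p μ) : MemLp (markovOp κ f) p μ :=
  ⟨hκ.aestronglyMeasurable_markovOp hf.1, (hκ.eLpNorm_markovOp_le hp1 hp hf.1).trans_lt hf.2⟩

theorem ae_integrable_of_memLp [IsMarkovKernel κ] (hκ : κ.Invariant μ) (hp1 : 1 ≤ p)
    (hp : p ≠ ∞) (hf : MemLp f p μ) : ∀ᵐ x ∂μ, Integrable f (κ x) := by
  have hp0 : p ≠ 0 := (zero_lt_one.trans_le hp1).ne'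
  set g := hf.1.mk f
  have hg : StronglyMeasurable g := hf.1.stronglyMeasurable_mk
  have hF : Measurable fun y => ‖g y‖ₑ ^ p.toReal := hg.measurable.enorm.pow_const _
  have hfin : ∫⁻ x, ∫⁻ y, ‖g y‖ₑ ^ p.toReal ∂κ x ∂μ ≠ ∞ := by
    rw [hκ.lintegral_lintegral hF]
    exact (lintegral_rpow_enorm_lt_top_of_eLpNorm_lt_top hp0 hp (hf.ae_eq hf.1.ae_eq_mk).2).ne
  filter_upwards [ae_lt_top hF.lintegral_kernel hfin, hκ.ae_ae_of_ae hf.1.ae_eq_mk] with x hx hfg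
  have hgx : MemLp g p (κ x) :=
    ⟨hg.aestronglyMeasurable, (eLpNorm_lt_top_iff_lintegral_rpow_enorm_lt_top hp0 hp).2 hx⟩
  exact (hgx.integrable hp1).congr (EventuallyEq.symm hfg)

theorem lintegral_evariance_add_lintegral_enorm_markovOp_sq [IsMarkovKernel κ]
    (hκ : κ.Invariant μ) (hf : StronglyMeasurable f) :
    ∫⁻ x, evariance f (κ x) ∂μ + ∫⁻ x, ‖markovOp κ f x‖ₑ ^ 2 ∂μ = ∫⁻ y, ‖f y‖ₑ ^ 2 ∂μ := by
  rw [← lintegral_add_left (measurable_evariance hf.measurable),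
    ← hκ.lintegral_lintegral (hf.measurable.enorm.pow_const 2)]
  refine lintegral_congr fun x => ?_
  have hjensen : ‖markovOp κ f x‖ₑ ^ 2 ≤ ∫⁻ y, ‖f y‖ₑ ^ 2 ∂κ x := by
    simpa [markovOp] using
      enorm_integral_rpow_le_lintegral_enorm_rpow one_le_two hf.aestronglyMeasurable
  have hsq : ENNReal.ofReal (markovOp κ f x ^ 2) = ‖markovOp κ f x‖ₑ ^ 2 := by
    rw [Real.enorm_eq_ofReal_abs, ← ENNReal.ofReal_pow (abs_nonneg _), sq_abs]
  rw [evariance_def' hf.aestronglyMeasurable]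
  change _ - ENNReal.ofReal (markovOp κ f x ^ 2) + _ = _
  rw [hsq, tsub_add_cancel_of_le hjensen]

theorem exists_ae_eq_const_of_markovOp_ae_eq [IsMarkovKernel κ] (hκ : κ.Invariant μ)
    (hreg : ∀ x y, κ x ≪ κ y) (hf : MemLp f 2 μ) (hfix : markovOp κ f =ᵐ[μ] f) :
    ∃ c : ℝ, f =ᵐ[μ] fun _ => c := by
  set g := hf.1.mk f
  have hg : StronglyMeasurable g := hf.1.stronglyMeasurable_mk
  have hfg : f =ᵐ[μ] g := hf.1.ae_eq_mk
  have hgfix : markovOp κ g =ᵐ[μ] g := (hκ.markovOp_congr_ae hfg.symm).trans (hfix.trans hfg)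
  have hvar : ∀ᵐ x ∂μ, g =ᵐ[κ x] fun _ => markovOp κ g x := by
    have hfin : ∫⁻ y, ‖g y‖ₑ ^ 2 ∂μ ≠ ∞ := by
      simpa using (lintegral_rpow_enorm_lt_top_of_eLpNorm_lt_top two_ne_zero ENNReal.ofNat_ne_top
        (hf.ae_eq hfg).2).ne
    have h0 : ∫⁻ x, evariance g (κ x) ∂μ = 0 := by
      have h := hκ.lintegral_evariance_add_lintegral_enorm_markovOp_sq hg
      have hsq : ∫⁻ x, ‖markovOp κ g x‖ₑ ^ 2 ∂μ = ∫⁻ y, ‖g y‖ₑ ^ 2 ∂μ :=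
        lintegral_congr_ae (hgfix.mono fun x hx => congrArg (‖·‖ₑ ^ 2) hx)
      rw [hsq] at h
      exact (ENNReal.add_left_inj hfin).1 (h.trans (zero_add _).symm)
    filter_upwards [(lintegral_eq_zero_iff (measurable_evariance hg.measurable)).1 h0] with x hx
    exact (evariance_eq_zero_iff hg.measurable.aemeasurable).1 hx
  rcases eq_zero_or_neZero μ with rfl | hμ
  · exact ⟨0, by simp [EventuallyEq]⟩
  obtain ⟨x₀, hx₀⟩ := hvar.exists
  have hconst : ∀ x, g =ᵐ[κ x] fun _ => markovOp κ g x₀ := fun x => (hreg x x₀).ae_le hx₀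
  have hTg : markovOp κ g = fun _ => markovOp κ g x₀ := by
    ext x
    simp [markovOp, integral_congr_ae (hconst x)]
  exact ⟨markovOp κ g x₀, hfg.trans (hgfix.symm.trans (by rw [hTg]))⟩

noncomputable def markovOpLp [IsMarkovKernel κ] (hκ : κ.Invariant μ) (p : ℝ≥0∞) [Fact (1 ≤ p)]
    (hp : p ≠ ∞) : Lp ℝ p μ →L[ℝ] Lp ℝ p μ :=
  LinearMap.mkContinuous
    { toFun := fun f => (hκ.memLp_markovOp Fact.out hp (Lp.memLp f)).toLp _
      map_add' := fun f g => by
        rw [← MemLp.toLp_add]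
        refine MemLp.toLp_congr _ _ ?_
        filter_upwards [hκ.markovOp_congr_ae (Lp.coeFn_add f g),
          hκ.ae_integrable_of_memLp Fact.out hp (Lp.memLp f),
          hκ.ae_integrable_of_memLp Fact.out hp (Lp.memLp g)] with x hx hfx hgx
        rw [hx]
        exact integral_add hfx hgx
      map_smul' := fun c f => by
        rw [RingHom.id_apply, ← MemLp.toLp_const_smul]
        refine MemLp.toLp_congr _ _ ?_
        rw [← markovOp_smul]
        exact hκ.markovOp_congr_ae (Lp.coeFn_smul c f) }
    1 fun f => by
      rw [one_mul, LinearMap.coe_mk, AddHom.coe_mk, Lp.norm_toLp, Lp.norm_def]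
      exact ENNReal.toReal_mono (Lp.eLpNorm_ne_top f)
        (hκ.eLpNorm_markovOp_le Fact.out hp (Lp.aestronglyMeasurable f))

variable [IsMarkovKernel κ] [Fact (1 ≤ p)] (hκ : κ.Invariant μ) (hp : p ≠ ∞)

theorem coeFn_markovOpLp (f : Lp ℝ p μ) : ⇑(hκ.markovOpLp p hp f) =ᵐ[μ] markovOp κ f :=
  MemLp.coeFn_toLp (hκ.memLp_markovOp Fact.out hp (Lp.memLp f))

theorem norm_markovOpLp_le : ‖hκ.markovOpLp p hp‖ ≤ 1 :=
  LinearMap.mkContinuous_norm_le _ zero_le_one _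

theorem coeFn_iterate_markovOpLp (f : Lp ℝ p μ) (n : ℕ) :
    ⇑((hκ.markovOpLp p hp)^[n] f) =ᵐ[μ] (markovOp κ)^[n] f := by
  induction n with
  | zero => rfl
  | succ n ih =>
    rw [Function.iterate_succ_apply', Function.iterate_succ_apply']
    exact (hκ.coeFn_markovOpLp hp _).trans (hκ.markovOp_congr_ae ih)

theorem markovOpLp_const [IsFiniteMeasure μ] (c : ℝ) :
    hκ.markovOpLp p hp (Lp.const p μ c) = Lp.const p μ c := by
  refine Lp.ext ((hκ.coeFn_markovOpLp hp _).trans ?_)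
  exact (hκ.markovOp_congr_ae (Lp.coeFn_const ..)).trans
    ((EventuallyEq.of_eq (markovOp_const c)).trans (Lp.coeFn_const ..).symm)

theorem mem_span_const_of_markovOpLp_eq [IsFiniteMeasure μ] (hreg : ∀ x y, κ x ≪ κ y)
    {f : Lp ℝ 2 μ} (hf : hκ.markovOpLp 2 ENNReal.ofNat_ne_top f = f) :
    f ∈ ℝ ∙ Lp.const 2 μ 1 := by
  have hfix : markovOp κ f =ᵐ[μ] f := by
    simpa [hf] using (hκ.coeFn_markovOpLp ENNReal.ofNat_ne_top f).symm
  obtain ⟨c, hc⟩ := hκ.exists_ae_eq_const_of_markovOp_ae_eq hreg (Lp.memLp f) hfix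
  refine Submodule.mem_span_singleton.2 ⟨c, Lp.ext ?_⟩
  filter_upwards [Lp.coeFn_smul c (Lp.const 2 μ (1 : ℝ)), Lp.coeFn_const (p := 2) (μ := μ) (1 : ℝ),
    hc] with x h1 h2 h3
  rw [h1, Pi.smul_apply, h2, h3]
  simp

theorem tendsto_birkhoffAverage_markovOpLp [IsProbabilityMeasure μ] (hreg : ∀ x y, κ x ≪ κ y)
    (f : Lp ℝ 2 μ) :
    Tendsto (birkhoffAverage ℝ (hκ.markovOpLp 2 ENNReal.ofNat_ne_top) id · f) atTop
      (𝓝 (Lp.const 2 μ (∫ x, f x ∂μ))) := by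
  have h := (hκ.markovOpLp 2 ENNReal.ofNat_ne_top).tendsto_birkhoffAverage_of_fixedPoints_eq_span
    (hκ.norm_markovOpLp_le _) (hκ.markovOpLp_const _ 1)
    (fun y hy => hκ.mem_span_const_of_markovOpLp_eq hreg hy) f
  have hinner : inner ℝ (Lp.const 2 μ (1 : ℝ)) f = ∫ x, f x ∂μ := by
    rw [← indicatorConstLp_univ, L2.inner_indicatorConstLp_one, setIntegral_univ]
  have hnorm : ‖Lp.const 2 μ (1 : ℝ)‖ = 1 := by
    simp [Lp.norm_const']
  convert h using 2
  rw [hinner, hnorm, one_pow, RCLike.ofReal_one, div_one]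
  simpa using (Lp.constₗ 2 μ ℝ).map_smul (∫ x, f x ∂μ) (1 : ℝ)

end Invariant

theorem Invariant.tendsto_integral_sq_cesaro_sub_integral [IsMarkovKernel κ]
    [IsProbabilityMeasure μ] (hκ : κ.Invariant μ) (hreg : ∀ x y, κ x ≪ κ y) {φ : α → ℝ}
    (hφ : MemLp φ 2 μ) :
    Tendsto (fun n : ℕ => ∫ x, ((n : ℝ)⁻¹ * (∑ i ∈ Finset.range n, (markovOp κ)^[i + 1] φ x)
      - ∫ y, φ y ∂μ) ^ 2 ∂μ) atTop (𝓝 0) := by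
  have hlim := hκ.tendsto_birkhoffAverage_markovOpLp hreg
    (hκ.markovOpLp 2 ENNReal.ofNat_ne_top (hφ.toLp φ))
  set T := hκ.markovOpLp 2 ENNReal.ofNat_ne_top
  rw [integral_congr_ae ((hκ.coeFn_markovOpLp _ _).trans (hκ.markovOp_congr_ae hφ.coeFn_toLp)),
    hκ.integral_markovOp (hφ.integrable one_le_two)] at hlim
  set C := Lp.const 2 μ (∫ y, φ y ∂μ)
  have hsq := (hlim.sub_const C).norm.pow 2
  rw [sub_self, norm_zero, zero_pow two_ne_zero] at hsq
  refine hsq.congr fun n => ?_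
  have hiter (i : ℕ) : ⇑(T^[i] (T (hφ.toLp φ))) =ᵐ[μ] (markovOp κ)^[i + 1] φ := by
    rw [← Function.iterate_succ_apply]
    exact (hκ.coeFn_iterate_markovOpLp _ _ _).trans (hκ.iterate_markovOp_congr_ae hφ.coeFn_toLp _)
  rw [L2.norm_sq_eq_integral_sq]
  refine integral_congr_ae ?_
  filter_upwards [Lp.coeFn_sub (birkhoffAverage ℝ T id n (T (hφ.toLp φ))) C,
    Lp.coeFn_birkhoffAverage hiter n, (Lp.coeFn_const .. : ⇑C =ᵐ[μ] _)] with x h1 h2 h3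
  rw [h1, Pi.sub_apply, h2, h3]
  rfl

end ProbabilityTheory.Kernel

/-- `K` is the one-period kernel `P(s, ·, s+θ, ·)`, so that `P_{s,s+iθ} φ` is the `i`-th iterate
of `ψ ↦ (z ↦ ∫ ψ dK z)`. -/
theorem stmt_9_general (m : ℕ) (K : (Fin m → ℝ) → Measure (Fin m → ℝ))
    (hK : ∀ x, IsProbabilityMeasure (K x))
    (hKmeas : ∀ A : Set (Fin m → ℝ), MeasurableSet A → Measurable fun x => K x A)
    (hreg : ∀ x y, K x ≪ K y)
    (μ : Measure (Fin m → ℝ)) (hμ : IsProbabilityMeasure μ)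
    (hinv : ∀ A : Set (Fin m → ℝ), MeasurableSet A → μ A = ∫⁻ x, K x A ∂μ)
    (φ : (Fin m → ℝ) → ℝ) (hφL2 : MemLp φ 2 μ) :
    Tendsto
      (fun n : ℕ => ∫ x,
        ((n : ℝ)⁻¹ * (∑ i ∈ Finset.range n,
            ((fun (ψ : (Fin m → ℝ) → ℝ) (z : Fin m → ℝ) => ∫ y, ψ y ∂ K z)^[i + 1] φ) x)
          - ∫ y, φ y ∂μ) ^ 2 ∂μ)
      atTop (nhds 0) := by
  let κ : Kernel (Fin m → ℝ) (Fin m → ℝ) := ⟨K, Measure.measurable_of_measurable_coe K hKmeas⟩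
  have : IsMarkovKernel κ := ⟨hK⟩
  have hκ : κ.Invariant μ := Measure.ext fun A hA => by
    rw [Measure.bind_apply hA κ.aemeasurable]
    exact (hinv A hA).symm
  exact hκ.tendsto_integral_sq_cesaro_sub_integral hreg hφL2

/-- Mean (Cesàro) ergodic convergence of the one-period Markov operator of a
regular kernel towards the mean with respect to the periodic measure, in `L²(μ)`.
Here `K` is the one-period kernel `P(s, ·, s+θ, ·)`, so that
`P_{s,s+iθ} φ = T^[i] φ` with `T ψ x = ∫ ψ dK x`. -/
theorem stmt_9 (m : ℕ) (K : (Fin m → ℝ) → Measure (Fin m → ℝ))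
    (hK : ∀ x, IsProbabilityMeasure (K x))
    (hKmeas : ∀ A : Set (Fin m → ℝ), MeasurableSet A → Measurable fun x => K x A)
    (hreg : ∀ x y, K x ≪ K y)
    (μ : Measure (Fin m → ℝ)) (hμ : IsProbabilityMeasure μ)
    (hinv : ∀ A : Set (Fin m → ℝ), MeasurableSet A → μ A = ∫⁻ x, K x A ∂μ)
    (φ : (Fin m → ℝ) → ℝ) (hφmeas : Measurable φ) (hφL2 : MemLp φ 2 μ) :
    Tendsto
      (fun n : ℕ => ∫ x,
        ((n : ℝ)⁻¹ * (∑ i ∈ Finset.range n,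
            ((fun (ψ : (Fin m → ℝ) → ℝ) (z : Fin m → ℝ) => ∫ y, ψ y ∂ K z)^[i + 1] φ) x)
          - ∫ y, φ y ∂μ) ^ 2 ∂μ)
      atTop (nhds 0) :=
  stmt_9_general m K hK hKmeas hreg μ hμ hinv φ hφL2
end
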